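/- For every m ∈ ℕ and every real q, the odd-index partial generating polynomial of the Thue-Morse sequence factors as t_{2m+1} · (∑_{i=0}^{2m+1} t_i q^i) = (q − 1) · t_m · (∑_{i=0}^{m} t_i (q^2)^i). -/

import Mathlib

/-! Grouping the terms of indices `2i` and `2i + 1` gives
`t_{2i} q^{2i} + t_{2i+1} q^{2i+1} = (1 - q) t_i (q²)^i`, so the partial sum of even length `2n`
is `(1 - q)` times the partial sum of length `n` at `q²`; multiplying by `t_{2m+1} = -t_m` gives
the factorization. -/

/-- The Thue-Morse sequence on the alphabet `{-1, 1}`: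
`t 0 = -1`, `t (2i) = t i`, `t (2i+1) = -t (2i)`. -/
def thueMorse : ℕ → ℤ
  | 0 => -1
  | n + 1 =>
    have : (n + 1) / 2 < n + 1 := Nat.div_lt_self (Nat.succ_pos n) one_lt_two
    if (n + 1) % 2 = 0 then thueMorse ((n + 1) / 2) else -thueMorse ((n + 1) / 2)

theorem Finset.sum_range_two_mul {M : Type*} [AddCommMonoid M] (f : ℕ → M) (n : ℕ) :
    ∑ i ∈ range (2 * n), f i = ∑ i ∈ range n, (f (2 * i) + f (2 * i + 1)) := by
  induction n with
  | zero => simp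
  | succ n ih =>
    rw [Nat.mul_succ, sum_range_succ, sum_range_succ, ih, sum_range_succ, add_assoc]

theorem thueMorse_two_mul (n : ℕ) : thueMorse (2 * n) = thueMorse n := by
  rcases n with _ | n
  · rfl
  · rw [show 2 * (n + 1) = 2 * n + 1 + 1 by ring, thueMorse]
    simp [show (2 * n + 1 + 1) % 2 = 0 by omega, show (2 * n + 1 + 1) / 2 = n + 1 by omega]

theorem thueMorse_two_mul_add_one (n : ℕ) : thueMorse (2 * n + 1) = -thueMorse n := by
  rw [thueMorse]
  simp [show (2 * n + 1) / 2 = n by omega]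

theorem thueMorse_sum_range_two_mul {R : Type*} [CommRing R] (n : ℕ) (q : R) :
    ∑ i ∈ Finset.range (2 * n), (thueMorse i : R) * q ^ i
      = (1 - q) * ∑ i ∈ Finset.range n, (thueMorse i : R) * (q ^ 2) ^ i := by
  rw [Finset.sum_range_two_mul, Finset.mul_sum]
  refine Finset.sum_congr rfl fun i _ => ?_
  rw [thueMorse_two_mul, thueMorse_two_mul_add_one]
  push_cast
  ring

/-- For every `m` and real `q`, the odd-index partial generating
polynomial of the Thue-Morse sequence factors as
`t_{2m+1} · (∑_{i=0}^{2m+1} t_i q^i) = (q - 1) · t_m · (∑_{i=0}^m t_i (q²)^i)`. -/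
theorem thueMorse_partial_sum_factorization (m : ℕ) (q : ℝ) :
    (thueMorse (2 * m + 1) : ℝ) * ∑ i ∈ Finset.range (2 * m + 2), (thueMorse i : ℝ) * q ^ i
      = (q - 1) * ((thueMorse m : ℝ)
          * ∑ i ∈ Finset.range (m + 1), (thueMorse i : ℝ) * (q ^ 2) ^ i) := by
  rw [show 2 * m + 2 = 2 * (m + 1) by ring, thueMorse_sum_range_two_mul,
    thueMorse_two_mul_add_one]
  push_cast
  ring
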